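/- Let η, η′ ∈ ℂ³ satisfy ‖η‖ = ‖η′‖ (Hermitian norm) and η₁² + η₂² + η₃² = η′₁² + η′₂² + η′₃² (equal values of the complex quadratic form). Then there exists a real orthogonal 3×3 matrix A (AᵀA = I) such that the ℂ-linear extension of A maps η to η′, i.e., Aη = η′. -/

import Mathlib

open Matrix
open scoped RealInnerProductSpace

noncomputable section

section Aux

variable {V : Type*} [NormedAddCommGroup V] [InnerProductSpace ℝ V] [FiniteDimensional ℝ V]

/-- Pairs of vectors with equal Gram matrices are related by a linear isometry. -/
theorem exists_isometry_of_gram (x y x' y' : V)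
    (hxx : ⟪x, x⟫ = ⟪x', x'⟫) (hyy : ⟪y, y⟫ = ⟪y', y'⟫)
    (hxy : ⟪x, y⟫ = ⟪x', y'⟫) :
    ∃ F : V →ₗᵢ[ℝ] V, F x = x' ∧ F y = y' := by
  set B : ℝ × ℝ →ₗ[ℝ] V :=
    (LinearMap.toSpanSingleton ℝ V x).coprod (LinearMap.toSpanSingleton ℝ V y) with hB
  set B' : ℝ × ℝ →ₗ[ℝ] V :=
    (LinearMap.toSpanSingleton ℝ V x').coprod (LinearMap.toSpanSingleton ℝ V y') with hB'
  have hBapp : ∀ u : ℝ × ℝ, B u = u.1 • x + u.2 • y := fun u => rfl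
  have hB'app : ∀ u : ℝ × ℝ, B' u = u.1 • x' + u.2 • y' := fun u => rfl
  have hsq : ∀ u : ℝ × ℝ, ‖B' u‖ = ‖B u‖ := by
    intro u
    have h1 : ⟪B u, B u⟫ = ⟪B' u, B' u⟫ := by
      rw [hBapp, hB'app]
      rw [real_inner_add_add_self, real_inner_add_add_self]
      simp only [real_inner_smul_left, real_inner_smul_right]
      rw [hxx, hyy, hxy]
    have h2 : ‖B u‖ ^ 2 = ‖B' u‖ ^ 2 := by
      rw [← real_inner_self_eq_norm_sq, ← real_inner_self_eq_norm_sq, h1]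
    have := congrArg Real.sqrt h2
    rwa [Real.sqrt_sq (norm_nonneg _), Real.sqrt_sq (norm_nonneg _), eq_comm] at this
  have hker : LinearMap.ker B ≤ LinearMap.ker B' := by
    intro u hu
    rw [LinearMap.mem_ker] at hu ⊢
    have := hsq u
    rw [hu, norm_zero, norm_eq_zero] at this
    exact this
  set φ : ((ℝ × ℝ) ⧸ LinearMap.ker B) →ₗ[ℝ] V := (LinearMap.ker B).liftQ B' hker with hφ
  set ψ := (B.quotKerEquivRange).symm with hψ
  set L0 : LinearMap.range B →ₗ[ℝ] V := φ.comp ψ.toLinearMap with hL0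
  have key : ∀ u : ℝ × ℝ, L0 ⟨B u, LinearMap.mem_range_self B u⟩ = B' u := by
    intro u
    have h1 : B.quotKerEquivRange (Submodule.Quotient.mk u)
        = ⟨B u, LinearMap.mem_range_self B u⟩ :=
      Subtype.ext (B.quotKerEquivRange_apply_mk u)
    have h2 : ψ ⟨B u, LinearMap.mem_range_self B u⟩ = Submodule.Quotient.mk u := by
      rw [hψ, LinearEquiv.symm_apply_eq, h1]
    simp only [hL0, LinearMap.comp_apply, LinearEquiv.coe_toLinearMap, h2, hφ,
      Submodule.liftQ_apply]
  have hnm : ∀ s : LinearMap.range B, ‖L0 s‖ = ‖s‖ := by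
    rintro ⟨v, u, rfl⟩
    rw [key u]
    exact (hsq u).trans rfl
  set F : V →ₗᵢ[ℝ] V := LinearIsometry.extend ⟨L0, hnm⟩ with hF
  refine ⟨F, ?_, ?_⟩
  · have hx : x = B (1, 0) := by rw [hBapp]; simp
    have hx' : x' = B' (1, 0) := by rw [hB'app]; simp
    have := LinearIsometry.extend_apply ⟨L0, hnm⟩ ⟨B (1,0), LinearMap.mem_range_self B _⟩
    rw [hx, hx']
    rw [← key (1,0)]
    exact this
  · have hy : y = B (0, 1) := by rw [hBapp]; simp
    have hy' : y' = B' (0, 1) := by rw [hB'app]; simp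
    have := LinearIsometry.extend_apply ⟨L0, hnm⟩ ⟨B (0,1), LinearMap.mem_range_self B _⟩
    rw [hy, hy']
    rw [← key (0,1)]
    exact this

end Aux

section Mat

/-- The matrix of a linear isometry of Euclidean space w.r.t. the standard basis. -/
def isoMatrix {n : ℕ} (F : EuclideanSpace ℝ (Fin n) →ₗᵢ[ℝ] EuclideanSpace ℝ (Fin n)) :
    Matrix (Fin n) (Fin n) ℝ :=
  Matrix.of fun i j => F (EuclideanSpace.single j 1) i

theorem isoMatrix_mulVec {n : ℕ}
    (F : EuclideanSpace ℝ (Fin n) →ₗᵢ[ℝ] EuclideanSpace ℝ (Fin n))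
    (v : EuclideanSpace ℝ (Fin n)) : (isoMatrix F).mulVec v = F v := by
  have hv : v = ∑ j : Fin n, v j • EuclideanSpace.single j 1 := by
    have := (EuclideanSpace.basisFun (Fin n) ℝ).sum_repr v
    simpa [EuclideanSpace.basisFun_apply, EuclideanSpace.basisFun_repr] using this.symm
  funext i
  have hFv : F v = ∑ j : Fin n, v j • F (EuclideanSpace.single j 1) := by
    conv_lhs => rw [hv]
    rw [map_sum]
    simp only [LinearIsometry.map_smul]
  calc (isoMatrix F).mulVec v i = ∑ j, v j * F (EuclideanSpace.single j 1) i := by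
        rw [Matrix.mulVec, dotProduct]
        exact Finset.sum_congr rfl fun j _ => by simp [isoMatrix, mul_comm]
    _ = ∑ j, EuclideanSpace.proj i (v j • F (EuclideanSpace.single j 1)) := by
        simp [PiLp.proj_apply, PiLp.smul_apply]
    _ = EuclideanSpace.proj i (∑ j : Fin n, v j • F (EuclideanSpace.single j 1)) :=
        (map_sum (EuclideanSpace.proj i : EuclideanSpace ℝ (Fin n) →L[ℝ] ℝ) _ _).symm
    _ = F v i := by rw [← hFv, PiLp.proj_apply]

theorem isoMatrix_orthogonal {n : ℕ}
    (F : EuclideanSpace ℝ (Fin n) →ₗᵢ[ℝ] EuclideanSpace ℝ (Fin n)) :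
    (isoMatrix F)ᵀ * isoMatrix F = 1 := by
  ext i j
  rw [Matrix.mul_apply]
  calc (∑ k, ((isoMatrix F)ᵀ) i k * (isoMatrix F) k j)
      = ∑ k, F (EuclideanSpace.single i 1) k * F (EuclideanSpace.single j 1) k := by
        exact Finset.sum_congr rfl fun k _ => by simp [isoMatrix, Matrix.transpose_apply]
    _ = ⟪F (EuclideanSpace.single i (1:ℝ)), F (EuclideanSpace.single j 1)⟫ := by
        simp only [PiLp.inner_apply, RCLike.inner_apply, conj_trivial]
        exact Finset.sum_congr rfl fun k _ => mul_comm _ _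
    _ = ⟪EuclideanSpace.single i (1:ℝ), EuclideanSpace.single j 1⟫ :=
        F.inner_map_map _ _
    _ = (1 : Matrix (Fin n) (Fin n) ℝ) i j := by
        simp [EuclideanSpace.inner_single_left, EuclideanSpace.single_apply, Matrix.one_apply,
          eq_comm]

end Mat

/-- A real `3×3` matrix acting `ℂ`-linearly on `ℂ³` by complexification. -/
def actC3 (A : Matrix (Fin 3) (Fin 3) ℝ) (ζ : EuclideanSpace ℂ (Fin 3)) :
    EuclideanSpace ℂ (Fin 3) :=
  WithLp.toLp 2 ((A.map Complex.ofReal).mulVec ζ)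

/-- If two vectors of `ℂ³` have the same Hermitian norm and the same value of
the complex quadratic form `η₁² + η₂² + η₃²`, then some real orthogonal `3×3`
matrix (acting `ℂ`-linearly by complexification) maps one to the other. -/
theorem orthogonal_transitive_on_invariants (η η' : EuclideanSpace ℂ (Fin 3))
    (hnorm : ‖η‖ = ‖η'‖)
    (hquad : η 0 ^ 2 + η 1 ^ 2 + η 2 ^ 2 = η' 0 ^ 2 + η' 1 ^ 2 + η' 2 ^ 2) :
    ∃ A : Matrix (Fin 3) (Fin 3) ℝ, Aᵀ * A = 1 ∧ actC3 A η = η' := by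
  have hre := congrArg Complex.re hquad
  have him := congrArg Complex.im hquad
  simp only [Complex.add_re, Complex.add_im, pow_two, Complex.mul_re, Complex.mul_im]
    at hre him
  have h1 : ∑ i, ‖η i‖ ^ 2 = ∑ i, ‖η' i‖ ^ 2 := by
    have h : ‖η‖ ^ 2 = ‖η'‖ ^ 2 := by rw [hnorm]
    rwa [EuclideanSpace.norm_eq, EuclideanSpace.norm_eq,
      Real.sq_sqrt (Finset.sum_nonneg fun i _ => sq_nonneg _),
      Real.sq_sqrt (Finset.sum_nonneg fun i _ => sq_nonneg _)] at h
  rw [Fin.sum_univ_three, Fin.sum_univ_three] at h1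
  simp only [Complex.sq_norm, Complex.normSq_apply] at h1
  obtain ⟨F, hFx, hFy⟩ := exists_isometry_of_gram
    (V := EuclideanSpace ℝ (Fin 3))
    (WithLp.toLp 2 fun i => (η i).re) (WithLp.toLp 2 fun i => (η i).im)
    (WithLp.toLp 2 fun i => (η' i).re) (WithLp.toLp 2 fun i => (η' i).im)
    (by
      simp only [PiLp.inner_apply, RCLike.inner_apply, conj_trivial, Fin.sum_univ_three,
        WithLp.ofLp_toLp]
      ring_nf
      ring_nf at h1 hre him
      linarith)
    (by
      simp only [PiLp.inner_apply, RCLike.inner_apply, conj_trivial, Fin.sum_univ_three,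
        WithLp.ofLp_toLp]
      ring_nf
      ring_nf at h1 hre him
      linarith)
    (by
      simp only [PiLp.inner_apply, RCLike.inner_apply, conj_trivial, Fin.sum_univ_three,
        WithLp.ofLp_toLp]
      ring_nf
      ring_nf at h1 hre him
      linarith)
  refine ⟨isoMatrix F, isoMatrix_orthogonal F, ?_⟩
  have hAx : (isoMatrix F).mulVec (fun i => (η i).re) = fun i => (η' i).re := by
    rw [show (fun i => (η i).re) = (WithLp.toLp 2 fun i => (η i).re).ofLp from rfl,
      isoMatrix_mulVec, hFx]
  have hAy : (isoMatrix F).mulVec (fun i => (η i).im) = fun i => (η' i).im := by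
    rw [show (fun i => (η i).im) = (WithLp.toLp 2 fun i => (η i).im).ofLp from rfl,
      isoMatrix_mulVec, hFy]
  ext j
  have hact : actC3 (isoMatrix F) η j = ∑ k, ((isoMatrix F) j k : ℂ) * η k := by
    simp [actC3, Matrix.mulVec, dotProduct, Matrix.map_apply]
  apply Complex.ext
  · calc (actC3 (isoMatrix F) η j).re = ∑ k, (isoMatrix F) j k * (η k).re := by
          rw [hact, Complex.re_sum]
          exact Finset.sum_congr rfl fun k _ => by
            simp [Complex.mul_re]
      _ = (isoMatrix F).mulVec (fun i => (η i).re) j := by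
          simp [Matrix.mulVec, dotProduct]
      _ = (η' j).re := by rw [hAx]
  · calc (actC3 (isoMatrix F) η j).im = ∑ k, (isoMatrix F) j k * (η k).im := by
          rw [hact, Complex.im_sum]
          exact Finset.sum_congr rfl fun k _ => by
            simp [Complex.mul_im]
      _ = (isoMatrix F).mulVec (fun i => (η i).im) j := by
          simp [Matrix.mulVec, dotProduct]
      _ = (η' j).im := by rw [hAy]
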